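/- arXiv:1812.03688 — 2 statements merged into one kernel-verified Lean document; each statement's English description precedes it below -/
import Mathlib

section
/- Let ω ∈ [0,1], ϖ = ω² + (1−ω)², and for each i = 1,…,n+m let p_i > s_i > 0 with q_i = p_i − s_i > 0. Define r_i(c), η₁(c) = max_{1≤i≤n} r_i(c), η₂(c) = max_{n+1≤i≤n+m} r_i(c) as follows: r_i(c) = (−(c−1)p_i + √((c−1)²p_i² + 4c(p_i²−s_i²)))/(2cϖ) for i ≤ n and r_i(c) = ((c−1)p_i + √((c−1)²p_i² + 4c(p_i²−s_i²)))/(2cϖ) for i > n. Then: (1) each r_i(c) with i ≤ n is strictly decreasing on (0,∞) with limits ∞ as c→0⁺ and 0 as c→∞, and each r_i(c) with i > n is strictly increasing on (0,∞) with limits (p_i²−s_i²)/(ϖp_i) as c→0⁺ and p_i/ϖ as c→∞; (2) there is a unique c* > 0 with η₁(c*) = η₂(c*); (3) setting t* = η₂(c*) and γ* = c*t*, every pair t, γ > 0 satisfying (t + p_i/ϖ)(γ − p_i/ϖ) > −s_i²/ϖ² and γ > q_i/ϖ for all i ≤ n, and (γ + p_i/ϖ)(t − p_i/ϖ) > −s_i²/ϖ²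 and t > q_i/ϖ for all i > n, satisfies t > t* and γ > γ*; in particular max_{i>n} p_i/ϖ > t* and max_{i≤n} p_i/ϖ > γ*. -/
open Matrix Filter Kronecker

noncomputable section

/-- The ω-weighted linear functional `z ↦ ω·Re z + (1-ω)·Im z`. -/
def wlin (ω : ℝ) (z : ℂ) : ℝ := ω * z.re + (1 - ω) * z.im

/-- The ω-comparison matrix of a complex square matrix. -/
def omegaComp {N : Type*} [DecidableEq N] (ω : ℝ) (B : Matrix N N ℂ) : Matrix N N ℝ :=
  Matrix.of fun i j => if i = j then wlin ω (B i i) else -‖B i j‖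

/-- A real square matrix is a nonsingular M-matrix: nonpositive off-diagonal entries and
`M *ᵥ u > 0` entrywise for some entrywise positive `u`. -/
def IsNonsingMMatrix {N : Type*} [Fintype N] (M : Matrix N N ℝ) : Prop :=
  (∀ i j, i ≠ j → M i j ≤ 0) ∧ ∃ u : N → ℝ, (∀ i, 0 < u i) ∧ ∀ i, 0 < (M *ᵥ u) i

/-- Entrywise absolute value of a complex matrix. -/
def cabs {α β : Type*} (M : Matrix α β ℂ) : Matrix α β ℝ :=
  Matrix.of fun i j => ‖M i j‖

/-- `ϖ = ω² + (1−ω)²`. -/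
def vpi (ω : ℝ) : ℝ := ω ^ 2 + (1 - ω) ^ 2

/-- The larger root of `c t² + (c−1)(p/ϖ) t − p²/ϖ² + s²/ϖ² = 0` (rows `i ≤ n`). -/
def rlow (ϖ p s c : ℝ) : ℝ :=
  (-(c - 1) * p + Real.sqrt ((c - 1) ^ 2 * p ^ 2 + 4 * c * (p ^ 2 - s ^ 2))) / (2 * c * ϖ)

/-- The larger root of `c t² − (c−1)(p/ϖ) t − p²/ϖ² + s²/ϖ² = 0` (rows `i > n`). -/
def rhigh (ϖ p s c : ℝ) : ℝ :=
  ((c - 1) * p + Real.sqrt ((c - 1) ^ 2 * p ^ 2 + 4 * c * (p ^ 2 - s ^ 2))) / (2 * c * ϖ)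

/-- `η₁(c) = max_{1≤i≤n} r_i(c)`. -/
def eta1 {n m : ℕ} (ϖ : ℝ) (p s : Fin n ⊕ Fin m → ℝ) (c : ℝ) : ℝ :=
  ⨆ i : Fin n, rlow ϖ (p (Sum.inl i)) (s (Sum.inl i)) c

/-- `η₂(c) = max_{n+1≤i≤n+m} r_i(c)`. -/
def eta2 {n m : ℕ} (ϖ : ℝ) (p s : Fin n ⊕ Fin m → ℝ) (c : ℝ) : ℝ :=
  ⨆ i : Fin m, rhigh ϖ (p (Sum.inr i)) (s (Sum.inr i)) c

/-!
For `t ≥ 0` the sign of `(c t + p/ϖ)(t - p/ϖ) + s²/ϖ²` is the sign of `t - rhigh ϖ p s c`,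
because `rhigh` is its larger root and the other root is negative; so, with `c = γ/t`, the
ADDA conditions say exactly that every `r_i(c)` is below `t`. The substitution `c ↦ c⁻¹`
exchanges the two families, `rhigh ϖ p s c⁻¹ = c * rlow ϖ p s c`, which transfers monotonicity
and limits from `rhigh` to `rlow` and makes `c ↦ c η₁(c)` decreasing and `c ↦ c η₂(c)`
increasing. Since `η₁ - η₂` goes from `+∞` near `0` to negative values near `∞`, the
intermediate value theorem gives the crossing `c*`, unique by strict monotonicity. Comparing
`c = γ/t` with `c*` on the side where `η₁` resp. `η₂` is monotone gives `t* < t`; the same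
argument for `c η₁`, `c η₂` gives `γ* < γ`.
-/

open Set Topology

lemma vpi_pos (ω : ℝ) : 0 < vpi ω := by
  unfold vpi; nlinarith [sq_nonneg (2 * ω - 1)]

section Roots

variable {ϖ p s c t : ℝ}

lemma sq_lt_discr (hs : 0 < s) (hsp : s < p) (hc : 0 < c) :
    ((c - 1) * p) ^ 2 < (c - 1) ^ 2 * p ^ 2 + 4 * c * (p ^ 2 - s ^ 2) := by
  have : 0 < p ^ 2 - s ^ 2 := by nlinarith
  nlinarith [mul_pos hc this]

lemma abs_lt_sqrt_discr (hs : 0 < s) (hsp : s < p) (hc : 0 < c) :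
    |(c - 1) * p| < √((c - 1) ^ 2 * p ^ 2 + 4 * c * (p ^ 2 - s ^ 2)) := by
  rw [Real.lt_sqrt (abs_nonneg _), sq_abs]
  exact sq_lt_discr hs hsp hc

lemma rhigh_pos (hϖ : 0 < ϖ) (hs : 0 < s) (hsp : s < p) (hc : 0 < c) : 0 < rhigh ϖ p s c := by
  have := (abs_lt_sqrt_discr hs hsp hc).trans_le' (neg_le_abs _)
  unfold rhigh
  exact div_pos (by linarith) (by positivity)

lemma rhigh_root (hϖ : ϖ ≠ 0) (hs : 0 < s) (hsp : s < p) (hc : 0 < c) :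
    (c * rhigh ϖ p s c + p / ϖ) * (rhigh ϖ p s c - p / ϖ) = -s ^ 2 / ϖ ^ 2 := by
  have hD := Real.sq_sqrt ((sq_nonneg _).trans (sq_lt_discr hs hsp hc).le)
  unfold rhigh
  generalize √((c - 1) ^ 2 * p ^ 2 + 4 * c * (p ^ 2 - s ^ 2)) = S at hD ⊢
  field_simp
  linear_combination hD

lemma rhigh_factor (hϖ : 0 < ϖ) (hs : 0 < s) (hsp : s < p) (hc : 0 < c) (t : ℝ) :
    (c * t + p / ϖ) * (t - p / ϖ) + s ^ 2 / ϖ ^ 2 =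
      (t - rhigh ϖ p s c) * (c * t + (p ^ 2 - s ^ 2) / (ϖ ^ 2 * rhigh ϖ p s c)) := by
  have hr := (rhigh_pos hϖ hs hsp hc).ne'
  have := rhigh_root hϖ.ne' hs hsp hc
  field_simp at this ⊢
  linear_combination t * this

lemma rhigh_factor_pos (hϖ : 0 < ϖ) (hs : 0 < s) (hsp : s < p) (hc : 0 < c) (ht : 0 ≤ t) :
    0 < c * t + (p ^ 2 - s ^ 2) / (ϖ ^ 2 * rhigh ϖ p s c) := by
  have : 0 < p ^ 2 - s ^ 2 := by nlinarith
  have := rhigh_pos hϖ hs hsp hc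
  positivity

lemma rhigh_lt_iff (hϖ : 0 < ϖ) (hs : 0 < s) (hsp : s < p) (hc : 0 < c) (ht : 0 ≤ t) :
    rhigh ϖ p s c < t ↔ -s ^ 2 / ϖ ^ 2 < (c * t + p / ϖ) * (t - p / ϖ) := by
  rw [neg_div, neg_lt_iff_pos_add, rhigh_factor hϖ hs hsp hc,
    mul_pos_iff_of_pos_right (rhigh_factor_pos hϖ hs hsp hc ht), sub_pos]

lemma rhigh_le_iff (hϖ : 0 < ϖ) (hs : 0 < s) (hsp : s < p) (hc : 0 < c) (ht : 0 ≤ t) :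
    rhigh ϖ p s c ≤ t ↔ -s ^ 2 / ϖ ^ 2 ≤ (c * t + p / ϖ) * (t - p / ϖ) := by
  rw [neg_div, neg_le_iff_add_nonneg, rhigh_factor hϖ hs hsp hc,
    mul_nonneg_iff_of_pos_right (rhigh_factor_pos hϖ hs hsp hc ht), sub_nonneg]

lemma rhigh_lt_div (hϖ : 0 < ϖ) (hs : 0 < s) (hsp : s < p) (hc : 0 < c) :
    rhigh ϖ p s c < p / ϖ := by
  rw [rhigh_lt_iff hϖ hs hsp hc (div_pos (hs.trans hsp) hϖ).le, sub_self, mul_zero, neg_div]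
  exact neg_neg_of_pos (by positivity)

lemma rhigh_strictMonoOn (hϖ : 0 < ϖ) (hs : 0 < s) (hsp : s < p) :
    StrictMonoOn (rhigh ϖ p s) (Ioi 0) := by
  intro a ha b hb hab
  set r := rhigh ϖ p s a
  have hr := rhigh_pos hϖ hs hsp ha
  have hshift : (b * r + p / ϖ) * (r - p / ϖ) =
      -s ^ 2 / ϖ ^ 2 + (b - a) * r * (r - p / ϖ) := by
    linear_combination rhigh_root hϖ.ne' hs hsp ha
  have hneg : (b - a) * r * (r - p / ϖ) < 0 :=
    mul_neg_of_pos_of_neg (by nlinarith) (sub_neg.2 (rhigh_lt_div hϖ hs hsp ha))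
  refine lt_of_not_ge fun hle => ?_
  have := (rhigh_le_iff hϖ hs hsp hb hr.le).1 hle
  linarith

lemma rhigh_inv (hc : 0 < c) : rhigh ϖ p s c⁻¹ = c * rlow ϖ p s c := by
  have hD : (c⁻¹ - 1) ^ 2 * p ^ 2 + 4 * c⁻¹ * (p ^ 2 - s ^ 2) =
      ((c - 1) ^ 2 * p ^ 2 + 4 * c * (p ^ 2 - s ^ 2)) * (c⁻¹) ^ 2 := by
    field_simp; ring
  rw [rhigh, rlow, hD, Real.sqrt_mul' _ (sq_nonneg _), Real.sqrt_sq (inv_nonneg.2 hc.le)]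
  field_simp
  ring

lemma rlow_eq (hc : 0 < c) : rlow ϖ p s c = c⁻¹ * rhigh ϖ p s c⁻¹ := by
  rw [rhigh_inv hc, inv_mul_cancel_left₀ hc.ne']

lemma rlow_pos (hϖ : 0 < ϖ) (hs : 0 < s) (hsp : s < p) (hc : 0 < c) : 0 < rlow ϖ p s c := by
  rw [rlow_eq hc]
  exact mul_pos (inv_pos.2 hc) (rhigh_pos hϖ hs hsp (inv_pos.2 hc))

lemma rlow_lt_iff (hϖ : 0 < ϖ) (hs : 0 < s) (hsp : s < p) (hc : 0 < c) (ht : 0 ≤ t) :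
    rlow ϖ p s c < t ↔ -s ^ 2 / ϖ ^ 2 < (t + p / ϖ) * (c * t - p / ϖ) := by
  rw [← mul_lt_mul_iff_right₀ hc, ← rhigh_inv hc,
    rhigh_lt_iff hϖ hs hsp (inv_pos.2 hc) (mul_nonneg hc.le ht), inv_mul_cancel_left₀ hc.ne']

lemma mul_rlow_strictAntiOn (hϖ : 0 < ϖ) (hs : 0 < s) (hsp : s < p) :
    StrictAntiOn (fun c => c * rlow ϖ p s c) (Ioi 0) := by
  intro a ha b hb hab
  have ha' : a⁻¹ ∈ Ioi (0 : ℝ) := mem_Ioi.2 (inv_pos.2 ha)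
  have hb' : b⁻¹ ∈ Ioi (0 : ℝ) := mem_Ioi.2 (inv_pos.2 hb)
  simp only [← rhigh_inv ha, ← rhigh_inv hb]
  exact rhigh_strictMonoOn hϖ hs hsp hb' ha' (inv_strictAntiOn ha hb hab)

lemma rlow_strictAntiOn (hϖ : 0 < ϖ) (hs : 0 < s) (hsp : s < p) :
    StrictAntiOn (rlow ϖ p s) (Ioi 0) := by
  intro a ha b hb hab
  have ha' : a⁻¹ ∈ Ioi (0 : ℝ) := mem_Ioi.2 (inv_pos.2 ha)
  have hb' : b⁻¹ ∈ Ioi (0 : ℝ) := mem_Ioi.2 (inv_pos.2 hb)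
  have hinv := inv_strictAntiOn ha hb hab
  rw [rlow_eq ha, rlow_eq hb]
  exact mul_lt_mul'' hinv (rhigh_strictMonoOn hϖ hs hsp hb' ha' hinv) (le_of_lt hb')
    (rhigh_pos hϖ hs hsp hb').le

lemma mul_rhigh_strictMonoOn (hϖ : 0 < ϖ) (hs : 0 < s) (hsp : s < p) :
    StrictMonoOn (fun c => c * rhigh ϖ p s c) (Ioi 0) := by
  intro a ha b hb hab
  exact mul_lt_mul'' hab (rhigh_strictMonoOn hϖ hs hsp ha hb hab) (le_of_lt ha)
    (rhigh_pos hϖ hs hsp ha).le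

lemma rhigh_continuousOn (hϖ : ϖ ≠ 0) : ContinuousOn (rhigh ϖ p s) (Ioi 0) := by
  unfold rhigh
  exact ContinuousOn.div (by fun_prop) (by fun_prop) fun c hc =>
    mul_ne_zero (mul_ne_zero two_ne_zero (ne_of_gt hc)) hϖ

lemma rlow_continuousOn (hϖ : ϖ ≠ 0) : ContinuousOn (rlow ϖ p s) (Ioi 0) := by
  unfold rlow
  exact ContinuousOn.div (by fun_prop) (by fun_prop) fun c hc =>
    mul_ne_zero (mul_ne_zero two_ne_zero (ne_of_gt hc)) hϖ

lemma rhigh_tendsto_nhdsGT_zero (hϖ : 0 < ϖ) (hs : 0 < s) (hsp : s < p) :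
    Tendsto (rhigh ϖ p s) (𝓝[>] 0) (𝓝 ((p ^ 2 - s ^ 2) / (ϖ * p))) := by
  have hp : 0 < p := hs.trans hsp
  have hden : Tendsto (fun c : ℝ =>
      ϖ * (√((c - 1) ^ 2 * p ^ 2 + 4 * c * (p ^ 2 - s ^ 2)) - (c - 1) * p)) (𝓝 0)
      (𝓝 (ϖ * (2 * p))) := by
    convert (show Continuous fun c : ℝ =>
      ϖ * (√((c - 1) ^ 2 * p ^ 2 + 4 * c * (p ^ 2 - s ^ 2)) - (c - 1) * p) by fun_prop).tendsto 0
      using 2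
    rw [show ((0 : ℝ) - 1) ^ 2 * p ^ 2 + 4 * 0 * (p ^ 2 - s ^ 2) = p ^ 2 by ring,
      Real.sqrt_sq hp.le]
    ring
  -- rationalizing removes the `0 / 0` at `c = 0`
  have hlim := (tendsto_const_nhds (x := 2 * (p ^ 2 - s ^ 2))).div hden (by positivity)
  rw [show 2 * (p ^ 2 - s ^ 2) / (ϖ * (2 * p)) = (p ^ 2 - s ^ 2) / (ϖ * p) by
    field_simp] at hlim
  refine (hlim.mono_left nhdsWithin_le_nhds).congr' ?_
  filter_upwards [self_mem_nhdsWithin] with c (hc : 0 < c)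
  have hD := Real.sq_sqrt ((sq_nonneg _).trans (sq_lt_discr hs hsp hc).le)
  have hden := (abs_lt_sqrt_discr hs hsp hc).trans_le' (le_abs_self _)
  rw [Pi.div_apply, rhigh, div_eq_div_iff (by nlinarith) (by positivity)]
  linear_combination -ϖ * hD

lemma rhigh_tendsto_atTop (hϖ : ϖ ≠ 0) (hp : 0 ≤ p) :
    Tendsto (rhigh ϖ p s) atTop (𝓝 (p / ϖ)) := by
  have hlim : Tendsto (fun u : ℝ =>
      (-(u - 1) * p + √((u - 1) ^ 2 * p ^ 2 + 4 * u * (p ^ 2 - s ^ 2))) / (2 * ϖ)) (𝓝 0)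
      (𝓝 (p / ϖ)) := by
    convert (show Continuous fun u : ℝ =>
      (-(u - 1) * p + √((u - 1) ^ 2 * p ^ 2 + 4 * u * (p ^ 2 - s ^ 2))) / (2 * ϖ) by
      fun_prop).tendsto 0 using 2
    rw [show ((0 : ℝ) - 1) ^ 2 * p ^ 2 + 4 * 0 * (p ^ 2 - s ^ 2) = p ^ 2 by ring,
      Real.sqrt_sq hp]
    field_simp
    ring
  -- `hlim` is about `u ↦ u * rlow ϖ p s u`, and `rhigh ϖ p s c = c⁻¹ * rlow ϖ p s c⁻¹`
  refine (hlim.comp tendsto_inv_atTop_zero).congr' ?_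
  filter_upwards [eventually_gt_atTop 0] with c hc
  have hc' : 0 < c⁻¹ := inv_pos.2 hc
  rw [Function.comp_apply, ← inv_inv c, rhigh_inv hc', rlow, inv_inv]
  field_simp

lemma rlow_tendsto_nhdsGT_zero (hϖ : 0 < ϖ) (hp : 0 < p) :
    Tendsto (rlow ϖ p s) (𝓝[>] 0) atTop := by
  refine (tendsto_inv_nhdsGT_zero.atTop_mul_pos (div_pos hp hϖ)
    ((rhigh_tendsto_atTop (s := s) hϖ.ne' hp.le).comp tendsto_inv_nhdsGT_zero)).congr' ?_
  filter_upwards [self_mem_nhdsWithin] with c hc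
  exact (rlow_eq hc).symm

lemma rlow_tendsto_atTop (hϖ : 0 < ϖ) (hs : 0 < s) (hsp : s < p) :
    Tendsto (rlow ϖ p s) atTop (𝓝 0) := by
  have hlim := tendsto_inv_atTop_zero.mul
    ((rhigh_tendsto_nhdsGT_zero hϖ hs hsp).comp tendsto_inv_atTop_nhdsGT_zero)
  rw [zero_mul] at hlim
  refine hlim.congr' ?_
  filter_upwards [eventually_gt_atTop 0] with c hc
  exact (rlow_eq hc).symm

end Roots

section FiniteSup

variable {ι α β : Type*} [Finite ι] [Nonempty ι] [ConditionallyCompleteLinearOrder β]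

lemma Finite.ciSup_lt {f : ι → β} {a : β} (h : ∀ i, f i < a) : ⨆ i, f i < a := by
  obtain ⟨i, hi⟩ := exists_eq_ciSup_of_finite (f := f)
  exact hi ▸ h i

lemma Finite.ciSup_lt_ciSup {f g : ι → β} (h : ∀ i, f i < g i) : ⨆ i, f i < ⨆ i, g i :=
  Finite.ciSup_lt fun i => (h i).trans_le (Finite.le_ciSup g i)

lemma strictMonoOn_ciSup [Preorder α] {f : ι → α → β} {S : Set α}
    (hf : ∀ i, StrictMonoOn (f i) S) : StrictMonoOn (fun x => ⨆ i, f i x) S := by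
  intro a ha b hb hab
  exact Finite.ciSup_lt_ciSup fun i => hf i ha hb hab

lemma strictAntiOn_ciSup [Preorder α] {f : ι → α → β} {S : Set α}
    (hf : ∀ i, StrictAntiOn (f i) S) : StrictAntiOn (fun x => ⨆ i, f i x) S := by
  intro a ha b hb hab
  exact Finite.ciSup_lt_ciSup fun i => hf i ha hb hab

lemma continuousOn_ciSup [TopologicalSpace α] [TopologicalSpace β] [OrderClosedTopology β]
    {f : ι → α → β} {S : Set α} (hf : ∀ i, ContinuousOn (f i) S) :
    ContinuousOn (fun x => ⨆ i, f i x) S := by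
  have := Fintype.ofFinite ι
  simpa only [Finset.sup'_univ_eq_ciSup] using
    ContinuousOn.finset_sup'_apply Finset.univ_nonempty fun i _ => hf i

end FiniteSup

section Crossing

variable {α β : Type*} [LinearOrder α] [Preorder β] {f g : α → β} {S : Set α}

lemma StrictAntiOn.eq_of_crossing (hf : StrictAntiOn f S) (hg : StrictMonoOn g S) {x y : α}
    (hx : x ∈ S) (hy : y ∈ S) (hfgx : f x = g x) (hfgy : f y = g y) : x = y := by
  rcases lt_trichotomy x y with h | h | h
  · exact ((((hf hx hy h).trans_eq hfgx).trans (hg hx hy h)).ne hfgy).elim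
  · exact h
  · exact ((((hf hy hx h).trans_eq hfgy).trans (hg hy hx h)).ne hfgx).elim

lemma AntitoneOn.crossing_lt (hf : AntitoneOn f S) (hg : MonotoneOn g S) {x c : α} {t : β}
    (hx : x ∈ S) (hc : c ∈ S) (hfg : f x = g x) (hfc : f c < t) (hgc : g c < t) : g x < t := by
  rcases le_total x c with h | h
  · exact (hg hx hc h).trans_lt hgc
  · exact hfg ▸ (hf hc hx h).trans_lt hfc

end Crossing

section Eta

variable {n m : ℕ} {ϖ c t : ℝ} {p s : Fin n ⊕ Fin m → ℝ}

lemma rlow_le_eta1 (i : Fin n) : rlow ϖ (p (Sum.inl i)) (s (Sum.inl i)) c ≤ eta1 ϖ p s c :=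
  Finite.le_ciSup (fun i => rlow ϖ (p (Sum.inl i)) (s (Sum.inl i)) c) i

lemma rhigh_le_eta2 (i : Fin m) : rhigh ϖ (p (Sum.inr i)) (s (Sum.inr i)) c ≤ eta2 ϖ p s c :=
  Finite.le_ciSup (fun i => rhigh ϖ (p (Sum.inr i)) (s (Sum.inr i)) c) i

lemma eta1_strictAntiOn [Nonempty (Fin n)] (hϖ : 0 < ϖ) (hs : ∀ i, 0 < s i)
    (hsp : ∀ i, s i < p i) : StrictAntiOn (eta1 ϖ p s) (Ioi 0) :=
  strictAntiOn_ciSup fun _ => rlow_strictAntiOn hϖ (hs _) (hsp _)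

lemma eta2_strictMonoOn [Nonempty (Fin m)] (hϖ : 0 < ϖ) (hs : ∀ i, 0 < s i)
    (hsp : ∀ i, s i < p i) : StrictMonoOn (eta2 ϖ p s) (Ioi 0) :=
  strictMonoOn_ciSup fun _ => rhigh_strictMonoOn hϖ (hs _) (hsp _)

lemma mul_eta1_strictAntiOn [Nonempty (Fin n)] (hϖ : 0 < ϖ) (hs : ∀ i, 0 < s i)
    (hsp : ∀ i, s i < p i) : StrictAntiOn (fun c => c * eta1 ϖ p s c) (Ioi 0) :=
  (strictAntiOn_ciSup fun _ => mul_rlow_strictAntiOn hϖ (hs _) (hsp _)).congr fun _ hc =>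
    (Real.mul_iSup_of_nonneg (le_of_lt hc) _).symm

lemma mul_eta2_strictMonoOn [Nonempty (Fin m)] (hϖ : 0 < ϖ) (hs : ∀ i, 0 < s i)
    (hsp : ∀ i, s i < p i) : StrictMonoOn (fun c => c * eta2 ϖ p s c) (Ioi 0) :=
  (strictMonoOn_ciSup fun _ => mul_rhigh_strictMonoOn hϖ (hs _) (hsp _)).congr fun _ hc =>
    (Real.mul_iSup_of_nonneg (le_of_lt hc) _).symm

lemma eta2_lt_iSup [Nonempty (Fin m)] (hϖ : 0 < ϖ) (hs : ∀ i, 0 < s i) (hsp : ∀ i, s i < p i)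
    (hc : 0 < c) : eta2 ϖ p s c < ⨆ i : Fin m, p (Sum.inr i) / ϖ :=
  Finite.ciSup_lt_ciSup fun _ => rhigh_lt_div hϖ (hs _) (hsp _) hc

lemma mul_eta1_lt_iSup [Nonempty (Fin n)] (hϖ : 0 < ϖ) (hs : ∀ i, 0 < s i)
    (hsp : ∀ i, s i < p i) (hc : 0 < c) :
    c * eta1 ϖ p s c < ⨆ i : Fin n, p (Sum.inl i) / ϖ := by
  rw [eta1, Real.mul_iSup_of_nonneg hc.le]
  exact Finite.ciSup_lt_ciSup fun _ =>
    rhigh_inv hc ▸ rhigh_lt_div hϖ (hs _) (hsp _) (inv_pos.2 hc)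

lemma eta1_lt_of_forall [Nonempty (Fin n)] (hϖ : 0 < ϖ) (hs : ∀ i, 0 < s i)
    (hsp : ∀ i, s i < p i) (hc : 0 < c) (ht : 0 ≤ t)
    (h : ∀ i : Fin n, -s (Sum.inl i) ^ 2 / ϖ ^ 2 <
      (t + p (Sum.inl i) / ϖ) * (c * t - p (Sum.inl i) / ϖ)) : eta1 ϖ p s c < t :=
  Finite.ciSup_lt fun i => (rlow_lt_iff hϖ (hs _) (hsp _) hc ht).2 (h i)

lemma eta2_lt_of_forall [Nonempty (Fin m)] (hϖ : 0 < ϖ) (hs : ∀ i, 0 < s i)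
    (hsp : ∀ i, s i < p i) (hc : 0 < c) (ht : 0 ≤ t)
    (h : ∀ i : Fin m, -s (Sum.inr i) ^ 2 / ϖ ^ 2 <
      (c * t + p (Sum.inr i) / ϖ) * (t - p (Sum.inr i) / ϖ)) : eta2 ϖ p s c < t :=
  Finite.ciSup_lt fun i => (rhigh_lt_iff hϖ (hs _) (hsp _) hc ht).2 (h i)

lemma exists_eta1_eq_eta2 [Nonempty (Fin n)] [Nonempty (Fin m)] (hϖ : 0 < ϖ)
    (hs : ∀ i, 0 < s i) (hsp : ∀ i, s i < p i) :
    ∃ c ∈ Ioi (0 : ℝ), eta1 ϖ p s c = eta2 ϖ p s c := by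
  obtain ⟨i⟩ := ‹Nonempty (Fin n)›
  obtain ⟨j⟩ := ‹Nonempty (Fin m)›
  refine isPreconnected_Ioi.intermediate_value₂_eventually₂ (l₂ := 𝓝[>] 0)
    (le_principal_iff.2 (Ioi_mem_atTop 0)) inf_le_right
    (continuousOn_ciSup fun _ => rlow_continuousOn hϖ.ne')
    (continuousOn_ciSup fun _ => rhigh_continuousOn hϖ.ne') ?_ ?_
  · -- near `∞` every `rlow` drops below `η₂(1) ≤ η₂(c)`
    have hpos : 0 < eta2 ϖ p s 1 := (rhigh_pos hϖ (hs _) (hsp _) one_pos).trans_le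
      (rhigh_le_eta2 j)
    filter_upwards [eventually_ge_atTop 1, eventually_all.2 fun k =>
      (rlow_tendsto_atTop hϖ (hs (Sum.inl k)) (hsp _)).eventually_lt_const hpos] with c hc hlt
    exact (Finite.ciSup_lt hlt).le.trans
      ((eta2_strictMonoOn hϖ hs hsp).monotoneOn (mem_Ioi.2 one_pos)
        (mem_Ioi.2 (one_pos.trans_le hc)) hc)
  · -- near `0` one `rlow` blows up while `η₂` stays below `max p/ϖ`
    filter_upwards [self_mem_nhdsWithin, (rlow_tendsto_nhdsGT_zero (s := s (Sum.inl i)) hϖ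
      ((hs _).trans (hsp _))).eventually_ge_atTop (⨆ j : Fin m, p (Sum.inr j) / ϖ)] with c hc hge
    exact (eta2_lt_iSup hϖ hs hsp hc).le.trans (hge.trans (rlow_le_eta1 i))

lemma eta2_lt_and_mul_lt_of_crossing [Nonempty (Fin n)] [Nonempty (Fin m)] (hϖ : 0 < ϖ)
    (hs : ∀ i, 0 < s i) (hsp : ∀ i, s i < p i) {cstar : ℝ} (hcstar : 0 < cstar)
    (hcross : eta1 ϖ p s cstar = eta2 ϖ p s cstar) (hc : 0 < c)
    (h1 : eta1 ϖ p s c < t) (h2 : eta2 ϖ p s c < t) :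
    eta2 ϖ p s cstar < t ∧ cstar * eta2 ϖ p s cstar < c * t :=
  ⟨(eta1_strictAntiOn hϖ hs hsp).antitoneOn.crossing_lt (eta2_strictMonoOn hϖ hs hsp).monotoneOn
      hcstar hc hcross h1 h2,
    (mul_eta1_strictAntiOn hϖ hs hsp).antitoneOn.crossing_lt
      (mul_eta2_strictMonoOn hϖ hs hsp).monotoneOn hcstar hc (by rw [hcross])
      (mul_lt_mul_of_pos_left h1 hc) (mul_lt_mul_of_pos_left h2 hc)⟩

end Eta

theorem stmt17_general {n m : ℕ} (hn : 0 < n) (hm : 0 < m)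
    (ω : ℝ)
    (p s : Fin n ⊕ Fin m → ℝ)
    (hs : ∀ i, 0 < s i) (hps : ∀ i, s i < p i) :
    (∀ i : Fin n,
      StrictAntiOn (fun c => rlow (vpi ω) (p (Sum.inl i)) (s (Sum.inl i)) c) (Set.Ioi 0) ∧
      Tendsto (fun c => rlow (vpi ω) (p (Sum.inl i)) (s (Sum.inl i)) c)
        (nhdsWithin 0 (Set.Ioi 0)) atTop ∧
      Tendsto (fun c => rlow (vpi ω) (p (Sum.inl i)) (s (Sum.inl i)) c) atTop (nhds 0)) ∧
    (∀ i : Fin m,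
      StrictMonoOn (fun c => rhigh (vpi ω) (p (Sum.inr i)) (s (Sum.inr i)) c) (Set.Ioi 0) ∧
      Tendsto (fun c => rhigh (vpi ω) (p (Sum.inr i)) (s (Sum.inr i)) c)
        (nhdsWithin 0 (Set.Ioi 0))
        (nhds ((p (Sum.inr i) ^ 2 - s (Sum.inr i) ^ 2) / (vpi ω * p (Sum.inr i)))) ∧
      Tendsto (fun c => rhigh (vpi ω) (p (Sum.inr i)) (s (Sum.inr i)) c) atTop
        (nhds (p (Sum.inr i) / vpi ω))) ∧
    ∃ cstar : ℝ, 0 < cstar ∧ eta1 (vpi ω) p s cstar = eta2 (vpi ω) p s cstar ∧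
      (∀ c : ℝ, 0 < c → eta1 (vpi ω) p s c = eta2 (vpi ω) p s c → c = cstar) ∧
      (∀ t γ : ℝ, 0 < t → 0 < γ →
        (∀ i : Fin n,
          -(s (Sum.inl i)) ^ 2 / (vpi ω) ^ 2 <
            (t + p (Sum.inl i) / vpi ω) * (γ - p (Sum.inl i) / vpi ω) ∧
          (p (Sum.inl i) - s (Sum.inl i)) / vpi ω < γ) →
        (∀ i : Fin m,
          -(s (Sum.inr i)) ^ 2 / (vpi ω) ^ 2 <
            (γ + p (Sum.inr i) / vpi ω) * (t - p (Sum.inr i) / vpi ω) ∧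
          (p (Sum.inr i) - s (Sum.inr i)) / vpi ω < t) →
        eta2 (vpi ω) p s cstar < t ∧ cstar * eta2 (vpi ω) p s cstar < γ) ∧
      eta2 (vpi ω) p s cstar < ⨆ i : Fin m, p (Sum.inr i) / vpi ω ∧
      cstar * eta2 (vpi ω) p s cstar < ⨆ i : Fin n, p (Sum.inl i) / vpi ω := by
  have hϖ := vpi_pos ω
  have : Nonempty (Fin n) := ⟨⟨0, hn⟩⟩
  have : Nonempty (Fin m) := ⟨⟨0, hm⟩⟩
  obtain ⟨cstar, hcstar, hcross⟩ := exists_eta1_eq_eta2 hϖ hs hps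
  refine ⟨fun i => ⟨rlow_strictAntiOn hϖ (hs _) (hps _),
      rlow_tendsto_nhdsGT_zero hϖ ((hs _).trans (hps _)), rlow_tendsto_atTop hϖ (hs _) (hps _)⟩,
    fun i => ⟨rhigh_strictMonoOn hϖ (hs _) (hps _), rhigh_tendsto_nhdsGT_zero hϖ (hs _) (hps _),
      rhigh_tendsto_atTop hϖ.ne' ((hs _).trans (hps _)).le⟩,
    cstar, hcstar, hcross,
    fun c hc hc' => (eta1_strictAntiOn hϖ hs hps).eq_of_crossing (eta2_strictMonoOn hϖ hs hps)
      hc hcstar hc' hcross,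
    fun t γ ht hγ H1 H2 => ?_, eta2_lt_iSup hϖ hs hps hcstar,
    hcross ▸ mul_eta1_lt_iSup hϖ hs hps hcstar⟩
  have hc : 0 < γ / t := div_pos hγ ht
  have hct : γ / t * t = γ := div_mul_cancel₀ γ ht.ne'
  have h1 := eta1_lt_of_forall hϖ hs hps hc ht.le fun i => by rw [hct]; exact (H1 i).1
  have h2 := eta2_lt_of_forall hϖ hs hps hc ht.le fun i => by rw [hct]; exact (H2 i).1
  simpa only [hct] using eta2_lt_and_mul_lt_of_crossing hϖ hs hps hcstar hcross hc h1 h2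

/-- monotonicity and limits of the functions `r_i`, existence of a unique
crossing point `c*` of `η₁` and `η₂`, and optimality of the resulting parameters
`t* = η₂(c*)`, `γ* = c*t*`. -/
theorem stmt17 {n m : ℕ} (hn : 0 < n) (hm : 0 < m)
    (ω : ℝ) (hω : ω ∈ Set.Icc (0 : ℝ) 1)
    (p s : Fin n ⊕ Fin m → ℝ)
    (hs : ∀ i, 0 < s i) (hps : ∀ i, s i < p i) (hq : ∀ i, 0 < p i - s i) :
    (∀ i : Fin n,
      StrictAntiOn (fun c => rlow (vpi ω) (p (Sum.inl i)) (s (Sum.inl i)) c) (Set.Ioi 0) ∧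
      Tendsto (fun c => rlow (vpi ω) (p (Sum.inl i)) (s (Sum.inl i)) c)
        (nhdsWithin 0 (Set.Ioi 0)) atTop ∧
      Tendsto (fun c => rlow (vpi ω) (p (Sum.inl i)) (s (Sum.inl i)) c) atTop (nhds 0)) ∧
    (∀ i : Fin m,
      StrictMonoOn (fun c => rhigh (vpi ω) (p (Sum.inr i)) (s (Sum.inr i)) c) (Set.Ioi 0) ∧
      Tendsto (fun c => rhigh (vpi ω) (p (Sum.inr i)) (s (Sum.inr i)) c)
        (nhdsWithin 0 (Set.Ioi 0))
        (nhds ((p (Sum.inr i) ^ 2 - s (Sum.inr i) ^ 2) / (vpi ω * p (Sum.inr i)))) ∧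
      Tendsto (fun c => rhigh (vpi ω) (p (Sum.inr i)) (s (Sum.inr i)) c) atTop
        (nhds (p (Sum.inr i) / vpi ω))) ∧
    ∃ cstar : ℝ, 0 < cstar ∧ eta1 (vpi ω) p s cstar = eta2 (vpi ω) p s cstar ∧
      (∀ c : ℝ, 0 < c → eta1 (vpi ω) p s c = eta2 (vpi ω) p s c → c = cstar) ∧
      (∀ t γ : ℝ, 0 < t → 0 < γ →
        (∀ i : Fin n,
          -(s (Sum.inl i)) ^ 2 / (vpi ω) ^ 2 <
            (t + p (Sum.inl i) / vpi ω) * (γ - p (Sum.inl i) / vpi ω) ∧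
          (p (Sum.inl i) - s (Sum.inl i)) / vpi ω < γ) →
        (∀ i : Fin m,
          -(s (Sum.inr i)) ^ 2 / (vpi ω) ^ 2 <
            (γ + p (Sum.inr i) / vpi ω) * (t - p (Sum.inr i) / vpi ω) ∧
          (p (Sum.inr i) - s (Sum.inr i)) / vpi ω < t) →
        eta2 (vpi ω) p s cstar < t ∧ cstar * eta2 (vpi ω) p s cstar < γ) ∧
      eta2 (vpi ω) p s cstar < ⨆ i : Fin m, p (Sum.inr i) / vpi ω ∧
      cstar * eta2 (vpi ω) p s cstar < ⨆ i : Fin n, p (Sum.inl i) / vpi ω :=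
  stmt17_general hn hm ω p s hs hps
end
end

section
/- Let ω ∈ [0,1], ϖ = ω² + (1−ω)², z_ω^⊥ = ω + j(1−ω), c > 0, and let x = a + jb be a complex number with θ := ωa + (1−ω)b > 0. Then the function f_ω(t) = |x − c·t·z_ω^⊥| / |x + t·z_ω^⊥| is monotonically increasing in t on the interval t ≥ T, where T = (−(c−1)ϖ|x|² + √((c−1)²ϖ²|x|⁴ + 4cϖθ²|x|²))/(2cϖθ); moreover, for such t the denominator never vanishes, and f_ω(t)′ ≥ 0 holds exactly when cϖθt² + (c−1)ϖ|x|²t − |x|²θ ≥ 0. -/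
/-! The argument works for `x, z` in any real inner product space (here `z = z_ω^⊥`). With
`ϖ = ‖z‖²`, `θ = ⟪x, z⟫` and `X = ‖x‖²`, the squared numerator and denominator are the
quadratics `N t = X - 2cθt + c²ϖt²` and `D t = X + 2θt + ϖt²`, and
`(N / D)' = 2 (c + 1) (cϖθt² + (c - 1)ϖXt - Xθ) / D²`. The threshold `T` is the positive root of
this quadratic, so `N / D`, and with it its square root, increases on `[T, ∞)`. For `t ≥ 0` the
denominator cannot vanish because `⟪x + t z, z⟫ = θ + tϖ > 0`. Where the numerator vanishes the
ratio attains its minimum `0`, so its derivative is `0`, and so is the quadratic. -/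

open Matrix Filter Kronecker

noncomputable section

/-- `z_ω^⊥ = ω + j(1−ω)`. -/
def zperp (ω : ℝ) : ℂ := ⟨ω, 1 - ω⟩

open Set RealInnerProductSpace

def posRoot (A B C : ℝ) : ℝ := (-B + √(B ^ 2 + 4 * A * C)) / (2 * A)

lemma quadratic_nonneg_of_posRoot_le {A B C t : ℝ} (hA : 0 < A) (hC : 0 ≤ C)
    (ht : posRoot A B C ≤ t) : 0 ≤ A * t ^ 2 + B * t - C := by
  have hdisc : 0 ≤ B ^ 2 + 4 * A * C := by positivity
  have hsq := Real.sq_sqrt hdisc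
  have hroot : √(B ^ 2 + 4 * A * C) ≤ 2 * A * t + B := by
    rw [posRoot, div_le_iff₀ (by positivity)] at ht
    linarith
  nlinarith [Real.sqrt_nonneg (B ^ 2 + 4 * A * C)]

lemma posRoot_pos {A B C : ℝ} (hA : 0 < A) (hC : 0 < C) : 0 < posRoot A B C := by
  rw [posRoot]
  have : |B| < √(B ^ 2 + 4 * A * C) := by
    rw [← Real.sqrt_sq_eq_abs]
    exact Real.sqrt_lt_sqrt (sq_nonneg B) (by linarith [mul_pos hA hC])
  have := le_abs_self B
  exact div_pos (by linarith) (by positivity)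

section InnerProductSpace

variable {E : Type*} [NormedAddCommGroup E] [InnerProductSpace ℝ E] (x z : E)

def distRatio (c t : ℝ) : ℝ := ‖x - (c * t) • z‖ / ‖x + t • z‖

def distRatioThreshold (c : ℝ) : ℝ :=
  posRoot (c * ‖z‖ ^ 2 * ⟪x, z⟫) ((c - 1) * ‖z‖ ^ 2 * ‖x‖ ^ 2) (‖x‖ ^ 2 * ⟪x, z⟫)

lemma norm_add_smul_sq (t : ℝ) :
    ‖x + t • z‖ ^ 2 = ‖x‖ ^ 2 + 2 * t * ⟪x, z⟫ + t ^ 2 * ‖z‖ ^ 2 := by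
  rw [norm_add_sq_real, real_inner_smul_right, norm_smul, mul_pow, Real.norm_eq_abs, sq_abs]
  ring

lemma add_smul_ne_zero_of_inner_pos (hxz : 0 < ⟪x, z⟫) {t : ℝ} (ht : 0 ≤ t) :
    x + t • z ≠ 0 := by
  intro h
  have : ⟪x + t • z, z⟫ = ⟪x, z⟫ + t * ‖z‖ ^ 2 := by
    rw [inner_add_left, real_inner_smul_left, real_inner_self_eq_norm_sq]
  rw [h, inner_zero_left] at this
  nlinarith [sq_nonneg ‖z‖]

lemma distRatio_eq_sqrt (c t : ℝ) :
    distRatio x z c t = √(‖x - (c * t) • z‖ ^ 2 / ‖x + t • z‖ ^ 2) := by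
  rw [← div_pow, Real.sqrt_sq (by positivity), distRatio]

lemma hasDerivAt_distRatio_sq (c : ℝ) {t : ℝ} (ht : x + t • z ≠ 0) :
    HasDerivAt (fun s => ‖x - (c * s) • z‖ ^ 2 / ‖x + s • z‖ ^ 2)
      (2 * (c + 1) * (c * ‖z‖ ^ 2 * ⟪x, z⟫ * t ^ 2 + (c - 1) * ‖z‖ ^ 2 * ‖x‖ ^ 2 * t
        - ‖x‖ ^ 2 * ⟪x, z⟫) / (‖x + t • z‖ ^ 2) ^ 2) t := by
  have hN : HasDerivAt (fun s => x - (c * s) • z) (-(c • z)) t := by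
    convert ((hasDerivAt_id t).smul_const (c • z)).const_sub x using 2 with s
    · rw [id, mul_comm, mul_smul]
    · rw [one_smul]
  have hD : HasDerivAt (fun s => x + s • z) z t := by
    simpa using ((hasDerivAt_id t).smul_const z).const_add x
  refine (hN.norm_sq.div hD.norm_sq (by positivity)).congr_deriv ?_
  have hN2 : ‖x - (c * t) • z‖ ^ 2 = ‖x‖ ^ 2 - 2 * (c * t) * ⟪x, z⟫ + (c * t) ^ 2 * ‖z‖ ^ 2 := by
    rw [sub_eq_add_neg, ← neg_smul, norm_add_smul_sq]; ring
  simp only [inner_sub_left, inner_add_left, inner_neg_right, real_inner_smul_left,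
    real_inner_smul_right, real_inner_self_eq_norm_sq]
  rw [hN2, norm_add_smul_sq]
  ring

theorem deriv_distRatio_nonneg_iff {c t : ℝ} (hc : -1 < c) (ht : x + t • z ≠ 0) :
    0 ≤ deriv (distRatio x z c) t ↔
      0 ≤ c * ‖z‖ ^ 2 * ⟪x, z⟫ * t ^ 2 + (c - 1) * ‖z‖ ^ 2 * ‖x‖ ^ 2 * t - ‖x‖ ^ 2 * ⟪x, z⟫ := by
  by_cases hN : x - (c * t) • z = 0
  · -- `distRatio` attains its minimum `0` at `t`; the quadratic vanishes since `x = (c t) • z`.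
    have hmin : IsLocalMin (distRatio x z c) t := by
      refine IsMinOn.isLocalMin (s := univ) (fun s _ => ?_) Filter.univ_mem
      change distRatio x z c t ≤ distRatio x z c s
      rw [distRatio, hN, norm_zero, zero_div]
      exact div_nonneg (norm_nonneg _) (norm_nonneg _)
    obtain rfl : x = (c * t) • z := sub_eq_zero.mp hN
    refine iff_of_true hmin.deriv_eq_zero.ge (le_of_eq ?_)
    rw [real_inner_smul_left, real_inner_self_eq_norm_sq, norm_smul, mul_pow, Real.norm_eq_abs,
      sq_abs]
    ring
  · have hD : 0 < ‖x + t • z‖ ^ 2 := pow_pos (norm_pos_iff.mpr ht) 2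
    have hr : 0 < ‖x - (c * t) • z‖ ^ 2 / ‖x + t • z‖ ^ 2 :=
      div_pos (pow_pos (norm_pos_iff.mpr hN) 2) hD
    rw [funext (distRatio_eq_sqrt x z c), ((hasDerivAt_distRatio_sq x z c ht).sqrt hr.ne').deriv,
      div_div, le_div_iff₀ (by positivity), zero_mul,
      mul_nonneg_iff_of_pos_left (by linarith)]

lemma distRatioThreshold_pos {c : ℝ} (hc : 0 < c) (hxz : 0 < ⟪x, z⟫) :
    0 < distRatioThreshold x z c := by
  have hx : x ≠ 0 := by rintro rfl; simp at hxz
  have hz : z ≠ 0 := by rintro rfl; simp at hxz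
  exact posRoot_pos (by positivity) (by positivity)

theorem monotoneOn_distRatio {c : ℝ} (hc : 0 < c) (hxz : 0 < ⟪x, z⟫) :
    MonotoneOn (distRatio x z c) (Ici (distRatioThreshold x z c)) := by
  have hz : z ≠ 0 := by rintro rfl; simp at hxz
  have hA : 0 < c * ‖z‖ ^ 2 * ⟪x, z⟫ := by positivity
  set T := distRatioThreshold x z c
  have hT : 0 < T := distRatioThreshold_pos x z hc hxz
  have hderiv : ∀ t ∈ Ici T, HasDerivAt _ _ t := fun t ht =>
    hasDerivAt_distRatio_sq x z c (add_smul_ne_zero_of_inner_pos x z hxz (hT.le.trans ht))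
  have hsq : MonotoneOn (fun t => ‖x - (c * t) • z‖ ^ 2 / ‖x + t • z‖ ^ 2) (Ici T) := by
    refine monotoneOn_of_hasDerivWithinAt_nonneg (convex_Ici T)
      (fun t ht => (hderiv t ht).continuousAt.continuousWithinAt)
      (fun t ht => (hderiv t (interior_subset ht)).hasDerivWithinAt) (fun t ht => ?_)
    rw [interior_Ici] at ht
    have hQ := quadratic_nonneg_of_posRoot_le hA (by positivity) ht.le
    exact div_nonneg (mul_nonneg (by linarith) hQ) (by positivity)
  intro s hs t ht hst
  rw [distRatio_eq_sqrt, distRatio_eq_sqrt]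
  exact Real.sqrt_le_sqrt (hsq hs ht hst)

end InnerProductSpace

theorem stmt19_general (ω : ℝ) (c : ℝ) (hc : 0 < c)
    (a b : ℝ) (hθ : 0 < ω * a + (1 - ω) * b) :
    let x : ℂ := ⟨a, b⟩
    let ϖ : ℝ := ω ^ 2 + (1 - ω) ^ 2
    let θ : ℝ := ω * a + (1 - ω) * b
    let T : ℝ := (-(c - 1) * ϖ * ‖x‖ ^ 2 +
      Real.sqrt ((c - 1) ^ 2 * ϖ ^ 2 * ‖x‖ ^ 4 +
        4 * c * ϖ * θ ^ 2 * ‖x‖ ^ 2)) / (2 * c * ϖ * θ)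
    let f : ℝ → ℝ := fun t =>
      ‖x - ((c * t : ℝ) : ℂ) * zperp ω‖ / ‖x + (t : ℂ) * zperp ω‖
    MonotoneOn f (Set.Ici T) ∧
    (∀ t ∈ Set.Ici T, x + (t : ℂ) * zperp ω ≠ 0) ∧
    (∀ t : ℝ, 0 ≤ t → (0 ≤ deriv f t ↔
      0 ≤ c * ϖ * θ * t ^ 2 + (c - 1) * ϖ * ‖x‖ ^ 2 * t - ‖x‖ ^ 2 * θ)) := by
  intro x ϖ θ T f
  have hinner : ⟪x, zperp ω⟫ = θ := by simp [x, θ, zperp, Complex.inner]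
  have hnorm : ‖zperp ω‖ ^ 2 = ϖ := by simp [ϖ, zperp, Complex.sq_norm, Complex.normSq_mk]; ring
  have hxz : 0 < ⟪x, zperp ω⟫ := hinner ▸ hθ
  have hf : f = distRatio x (zperp ω) c := by
    funext t; simp only [f, distRatio, Complex.real_smul]
  have hT : T = distRatioThreshold x (zperp ω) c := by
    simp only [T, distRatioThreshold, posRoot, hinner, hnorm]; ring_nf
  have hT0 : 0 ≤ T := hT ▸ (distRatioThreshold_pos x (zperp ω) hc hxz).le
  refine ⟨hf ▸ hT ▸ monotoneOn_distRatio x (zperp ω) hc hxz, fun t ht => ?_, fun t ht => ?_⟩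
  · simpa only [Complex.real_smul] using
      add_smul_ne_zero_of_inner_pos x (zperp ω) hxz (hT0.trans ht)
  · have := deriv_distRatio_nonneg_iff x (zperp ω) (by linarith : -1 < c)
      (add_smul_ne_zero_of_inner_pos x (zperp ω) hxz ht)
    rwa [hinner, hnorm, ← hf] at this

/-- monotonicity of `t ↦ |x − ct·z_ω^⊥|/|x + t·z_ω^⊥|` for
`t ≥ T`, nonvanishing of the denominator there, and the sign characterization of
the derivative. -/
theorem stmt19 (ω : ℝ) (hω : ω ∈ Set.Icc (0 : ℝ) 1) (c : ℝ) (hc : 0 < c)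
    (a b : ℝ) (hθ : 0 < ω * a + (1 - ω) * b) :
    let x : ℂ := ⟨a, b⟩
    let ϖ : ℝ := ω ^ 2 + (1 - ω) ^ 2
    let θ : ℝ := ω * a + (1 - ω) * b
    let T : ℝ := (-(c - 1) * ϖ * ‖x‖ ^ 2 +
      Real.sqrt ((c - 1) ^ 2 * ϖ ^ 2 * ‖x‖ ^ 4 +
        4 * c * ϖ * θ ^ 2 * ‖x‖ ^ 2)) / (2 * c * ϖ * θ)
    let f : ℝ → ℝ := fun t =>
      ‖x - ((c * t : ℝ) : ℂ) * zperp ω‖ / ‖x + (t : ℂ) * zperp ω‖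
    MonotoneOn f (Set.Ici T) ∧
    (∀ t ∈ Set.Ici T, x + (t : ℂ) * zperp ω ≠ 0) ∧
    (∀ t : ℝ, 0 ≤ t → (0 ≤ deriv f t ↔
      0 ≤ c * ϖ * θ * t ^ 2 + (c - 1) * ϖ * ‖x‖ ^ 2 * t - ‖x‖ ^ 2 * θ)) :=
  stmt19_general ω c hc a b hθ
end
end
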